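/- Let ℐ be a finite collection of dyadic intervals of ℝ, (c_I)_{I∈ℐ} uniformly bounded complex numbers, (a_I) coefficient functionals, and Λ_ℐ(f,g) := Σ_{I∈ℐ} c_I a_I(f) a_I(g). Fix a dyadic interval I₀ and write ℐ(I₀) := {I ∈ ℐ : I ⊆ I₀}. Then for all 0 < p, q < ∞, |Λ_{ℐ(I₀)}(f,g)| ≤ C · (sup_{I'∈ℐ(I₀)} |I'|^{-1/p} ‖(Σ_{I⊆I', I∈ℐ(I₀)} |a_I(f)|² 1_I/|I|)^{1/2}‖_{L^{p,∞}}) · (sup_{I'∈ℐ(I₀)} |I'|^{-1/q} ‖(Σ_{I⊆I', I∈ℐ(I₀)} |a_I(g)|² 1_I/|I|)^{1/2}‖_{L^{q,∞}}) · |I₀|, with C depending only on p, q. -/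

import Mathlib

open MeasureTheory ENNReal
open scoped Classical

noncomputable section

/-- A dyadic interval `[m 2^k, (m+1) 2^k)` of `ℝ`. -/
structure DyadicI where
  k : ℤ
  m : ℤ
deriving DecidableEq

namespace DyadicI

/-- Left endpoint. -/
def a (I : DyadicI) : ℝ := (I.m : ℝ) * (2 : ℝ) ^ I.k

/-- The length of a dyadic interval. -/
def len (I : DyadicI) : ℝ := (2 : ℝ) ^ I.k

/-- The underlying set. -/
def set (I : DyadicI) : Set ℝ := Set.Ico I.a (I.a + I.len)

end DyadicI

/-- A collection `S` of dyadic intervals is `η`-sparse if one can choose pairwise disjoint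
measurable major subsets `E I ⊆ I` with `|E I| ≥ η |I|`. -/
def IsSparseD (η : ℝ) (S : Set DyadicI) : Prop :=
  ∃ E : DyadicI → Set ℝ,
    (∀ I ∈ S, MeasurableSet (E I)) ∧
    (∀ I ∈ S, E I ⊆ I.set) ∧
    S.PairwiseDisjoint E ∧
    ∀ I ∈ S, ENNReal.ofReal η * volume I.set ≤ volume (E I)

/-- The localization function `χ_I(x) = (1 + dist(x,I)/ℓ(I))⁻¹` of a dyadic interval. -/
def chiD (I : DyadicI) (x : ℝ) : ℝ := (1 + Metric.infDist x I.set / I.len)⁻¹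

/-- A family of coefficient functionals `a_I`, depending linearly on the function. -/
def IsLinearCoeff (a : DyadicI → (ℝ → ℝ) → ℂ) : Prop :=
  ∀ (I : DyadicI) (c : ℝ) (f g : ℝ → ℝ),
    a I (fun x => c * f x + g x) = (c : ℂ) * a I f + a I g

/-- The energy condition: `Σ_{I ⊆ I₀} |a_I(f)|² ≤ C ‖f χ_{I₀}^M‖_{L²}²`. -/
def EnergyCond (a : DyadicI → (ℝ → ℝ) → ℂ) (C : ℝ≥0∞) (M : ℕ) : Prop :=
  ∀ (I₀ : DyadicI) (f : ℝ → ℝ), MemLp f 2 (volume : Measure ℝ) →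
    (∑' I : {I : DyadicI // I.set ⊆ I₀.set}, ((‖a (I : DyadicI) f‖₊ : ℝ≥0∞)) ^ 2) ≤
      C * eLpNorm (fun x => f x * chiD I₀ x ^ M) 2 volume ^ 2

/-- The Carleson size condition:
`sup_{I ⊆ I₀} (|I|⁻¹ Σ_{J ⊆ I} |a_J(f)|²)^{1/2} ≤ C sup_{I ⊆ I₀} |I|⁻¹ ‖f χ_I^M‖_{L¹}`. -/
def SizeCond (a : DyadicI → (ℝ → ℝ) → ℂ) (C : ℝ≥0∞) (M : ℕ) : Prop :=
  ∀ (I₀ : DyadicI) (f : ℝ → ℝ), MemLp f 2 (volume : Measure ℝ) →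
    (⨆ I : {I : DyadicI // I.set ⊆ I₀.set},
        ((∑' J : {J : DyadicI // J.set ⊆ (I : DyadicI).set},
            ((‖a (J : DyadicI) f‖₊ : ℝ≥0∞)) ^ 2) / ENNReal.ofReal (I : DyadicI).len)
          ^ (1/2 : ℝ)) ≤
      C * ⨆ I : {I : DyadicI // I.set ⊆ I₀.set},
        (∫⁻ x, (‖f x * chiD (I : DyadicI) x ^ M‖₊ : ℝ≥0∞) ∂volume) /
          ENNReal.ofReal (I : DyadicI).len

/-- An interval of `ℝ` with positive length. -/
structure Itv where
  a : ℝ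
  b : ℝ
  hab : a < b

namespace Itv

/-- The underlying set. -/
def set (Q : Itv) : Set ℝ := Set.Ico Q.a Q.b

/-- The length. -/
def len (Q : Itv) : ℝ := Q.b - Q.a

end Itv

/-- The localization function `χ_Q(x) = (1 + dist(x,Q)/ℓ(Q))⁻¹` of an interval. -/
def chiI (Q : Itv) (x : ℝ) : ℝ := (1 + Metric.infDist x Q.set / Q.len)⁻¹

/-- A collection `S` of intervals is `η`-sparse if one can choose pairwise disjoint
measurable major subsets `E Q ⊆ Q` with `|E Q| ≥ η |Q|`. -/
def IsSparseI (η : ℝ) (S : Set Itv) : Prop :=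
  ∃ E : Itv → Set ℝ,
    (∀ Q ∈ S, MeasurableSet (E Q)) ∧
    (∀ Q ∈ S, E Q ⊆ Q.set) ∧
    S.PairwiseDisjoint E ∧
    ∀ Q ∈ S, ENNReal.ofReal η * volume Q.set ≤ volume (E Q)

/-- The localized square function `(Σ_{I ∈ 𝒥} |a_I(f)|² 1_I/|I|)^{1/2}`, valued in `ℝ≥0∞`. -/
def sqFun (a : DyadicI → (ℝ → ℝ) → ℂ) (𝒥 : Finset DyadicI) (f : ℝ → ℝ) (x : ℝ) : ℝ≥0∞ :=
  (∑ I ∈ 𝒥, (‖a I f‖₊ : ℝ≥0∞) ^ 2 * I.set.indicator (fun _ => (1 : ℝ≥0∞)) x /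
      ENNReal.ofReal I.len) ^ (1/2 : ℝ)

/-- The weak-`L^p` quasinorm `sup_{λ>0} λ |{h > λ}|^{1/p}` of an `ℝ≥0∞`-valued function. -/
def wkNorm (p : ℝ) (h : ℝ → ℝ≥0∞) : ℝ≥0∞ :=
  ⨆ (l : ℝ) (_ : 0 < l), ENNReal.ofReal l * (volume {x | ENNReal.ofReal l < h x}) ^ (1 / p)

/-!
Stopping-time argument. Put `u_I = |a_I(f)|`, `v_I = |a_I(g)|` and let `A`, `B` be the two suprema,
so that the square function `S_M f` of the intervals of `ℐ(I₀)` below `M ∈ ℐ(I₀)` has weak-`L^p`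
norm at most `A |M|^{1/p}`, and likewise for `g`. By strong induction on `𝒢 ⊆ ℐ(I₀)`,
`Σ_{I ∈ 𝒢} u_I v_I ≤ 4 · 8^{1/p} 8^{1/q} A B |⋃ 𝒢|`.
On a maximal interval `M` of `𝒢` the square functions of `𝒢` are `S_M f` and `S_M g`, so by
Chebyshev they exceed `8^{1/p} A`, resp. `8^{1/q} B`, on sets of measure at most `|M|/8`: the
exceptional set `Ω` has `|Ω| ≤ |⋃ 𝒢|/4`. The intervals lying at least half in `Ω` cover at most
`2|Ω| ≤ |⋃ 𝒢|/2` and are handled by induction. Every other interval has `|I| ≤ 2|I \ Ω|`, so by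
Cauchy–Schwarz their sum is at most twice the integral over `Ωᶜ ∩ ⋃ 𝒢` of the product of the two
square functions, hence at most `2 · 8^{1/p} 8^{1/q} A B |⋃ 𝒢|`.
-/

lemma ENNReal.sum_mul_mul_le_sqrt_mul_sqrt {ι : Type*} (s : Finset ι) (a b w : ι → ℝ≥0∞) :
    ∑ i ∈ s, a i * b i * w i ≤
      (∑ i ∈ s, a i ^ 2 * w i) ^ (1 / 2 : ℝ) * (∑ i ∈ s, b i ^ 2 * w i) ^ (1 / 2 : ℝ) := by
  have hsq : ∀ c : ℝ≥0∞, ∀ i, (c * w i ^ (1 / 2 : ℝ)) ^ (2 : ℝ) = c ^ 2 * w i := fun c i => by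
    rw [ENNReal.mul_rpow_of_nonneg _ _ zero_le_two, ← ENNReal.rpow_mul, ENNReal.rpow_two]
    norm_num
  have hroot : ∀ i, w i ^ (1 / 2 : ℝ) * w i ^ (1 / 2 : ℝ) = w i := fun i => by
    rw [← ENNReal.rpow_add_of_nonneg _ _ (by norm_num) (by norm_num)]
    norm_num
  convert ENNReal.inner_le_Lp_mul_Lq s (fun i => a i * w i ^ (1 / 2 : ℝ))
    (fun i => b i * w i ^ (1 / 2 : ℝ)) Real.HolderConjugate.two_two using 1
  · refine Finset.sum_congr rfl fun i _ => ?_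
    rw [mul_mul_mul_comm, hroot]
  · simp only [hsq]

lemma ENNReal.le_mul_rpow_of_rpow_neg_mul_le {x y A : ℝ≥0∞} {r : ℝ} (hx0 : x ≠ 0) (hx : x ≠ ∞)
    (h : x ^ (-r) * y ≤ A) : y ≤ A * x ^ r := by
  calc y = x ^ r * (x ^ (-r) * y) := by
        rw [← mul_assoc, ← ENNReal.rpow_add _ _ hx0 hx, add_neg_cancel, ENNReal.rpow_zero, one_mul]
    _ ≤ x ^ r * A := by gcongr
    _ = A * x ^ r := mul_comm _ _

lemma ENNReal.eq_zero_of_two_mul_le {x : ℝ≥0∞} (hx : x ≠ ∞) (h : 2 * x ≤ x) : x = 0 :=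
  le_antisymm ((ENNReal.add_le_add_iff_left hx).1 (by rwa [← two_mul, add_zero])) zero_le

lemma wkNorm_mono {p : ℝ} (hp : 0 ≤ p) {h h' : ℝ → ℝ≥0∞} (hle : h ≤ h') :
    wkNorm p h ≤ wkNorm p h' := by
  unfold wkNorm
  gcongr with l hl x
  exact hle x

lemma volume_lt_le_wkNorm_div_rpow {p : ℝ} (hp : 0 < p) (h : ℝ → ℝ≥0∞) (l : ℝ≥0∞) :
    volume {x | l < h x} ≤ (wkNorm p h / l) ^ p := by
  have hpos : ∀ l : ℝ≥0∞, l ≠ 0 → volume {x | l < h x} ≤ (wkNorm p h / l) ^ p := by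
    intro l hl0
    rcases eq_or_ne l ∞ with rfl | hl
    · simp
    have hle : l * volume {x | l < h x} ^ (1 / p) ≤ wkNorm p h := by
      have := le_iSup₂ (f := fun (l : ℝ) (_ : 0 < l) =>
        ENNReal.ofReal l * volume {x | ENNReal.ofReal l < h x} ^ (1 / p)) l.toReal
        (ENNReal.toReal_pos hl0 hl)
      rwa [ENNReal.ofReal_toReal hl] at this
    calc volume {x | l < h x} = (volume {x | l < h x} ^ (1 / p)) ^ p := by
          rw [one_div, ENNReal.rpow_inv_rpow hp.ne']
      _ ≤ (wkNorm p h / l) ^ p := by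
          gcongr
          rwa [ENNReal.le_div_iff_mul_le (Or.inl hl0) (Or.inl hl), mul_comm]
  rcases eq_or_ne l 0 with rfl | hl0
  · -- at `l = 0` the bound is `∞` unless `wkNorm p h = 0`; then `{0 < h} = ⋃ n, {1/n < h}` is null
    rcases eq_or_ne (wkNorm p h) 0 with hW | hW
    · have hcover : {x | 0 < h x} ⊆ ⋃ n : ℕ, {x | (n : ℝ≥0∞)⁻¹ < h x} :=
        fun x hx => Set.mem_iUnion.2 (ENNReal.exists_inv_nat_lt (ne_of_gt hx))
      have hnull : volume {x | 0 < h x} = 0 :=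
        measure_mono_null hcover (measure_iUnion_null fun n =>
          le_antisymm ((hpos _ (by simp)).trans_eq (by simp [hW, hp])) zero_le)
      simp [hnull]
    · simp [ENNReal.div_zero hW, hp]
  · exact hpos l hl0

lemma volume_lt_le_div_of_wkNorm_le {p : ℝ} (hp : 0 < p) {h : ℝ → ℝ≥0∞} {A L c : ℝ≥0∞}
    (hc0 : c ≠ 0) (hc : c ≠ ∞) (hW : wkNorm p h ≤ A * L ^ (1 / p)) :
    volume {x | c ^ (1 / p) * A < h x} ≤ L / c := by
  have hcp0 : c ^ (1 / p) ≠ 0 := by simp [hc0, hp.le]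
  have hcp : c ^ (1 / p) ≠ ∞ := by simp [hc, hp.le]
  rcases eq_or_ne A ∞ with rfl | hA
  · rw [ENNReal.mul_top hcp0]
    simp
  rcases eq_or_ne A 0 with rfl | hA0
  · have hW0 : wkNorm p h = 0 := by simpa using hW
    refine (volume_lt_le_wkNorm_div_rpow hp h _).trans ?_
    simp [hW0, hp]
  calc volume {x | c ^ (1 / p) * A < h x} ≤ (wkNorm p h / (c ^ (1 / p) * A)) ^ p :=
        volume_lt_le_wkNorm_div_rpow hp h _
    _ ≤ (A * L ^ (1 / p) / (c ^ (1 / p) * A)) ^ p := by gcongr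
    _ = L / c := by
        rw [mul_comm A, ENNReal.mul_div_mul_right _ _ hA0 hA, ← ENNReal.div_rpow_of_nonneg _ _
          (by positivity), one_div, ENNReal.rpow_inv_rpow hp.ne']

lemma measure_le_two_mul_diff {α : Type*} [MeasurableSpace α] {μ : Measure α} {s t : Set α}
    (ht : MeasurableSet t) (hs : μ s ≠ ∞) (h : 2 * μ (s ∩ t) ≤ μ s) : μ s ≤ 2 * μ (s \ t) := by
  have hsplit := measure_inter_add_sdiff (μ := μ) s ht
  have hfin : μ (s ∩ t) ≠ ∞ := ne_top_of_le_ne_top hs (measure_mono Set.inter_subset_left)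
  have hle : μ (s ∩ t) ≤ μ (s \ t) :=
    (ENNReal.add_le_add_iff_left hfin).1 (by rwa [← two_mul, hsplit])
  rw [← hsplit, two_mul]
  gcongr

lemma nnnorm_sum_mul_mul_le {ι R : Type*} [SeminormedRing R] (s : Finset ι) {c : ι → R}
    (hc : ∀ i ∈ s, ‖c i‖ ≤ 1) (x y : ι → R) :
    (‖∑ i ∈ s, c i * x i * y i‖₊ : ℝ≥0∞) ≤ ∑ i ∈ s, (‖x i‖₊ : ℝ≥0∞) * ‖y i‖₊ := by
  refine (ENNReal.coe_le_coe.2 (nnnorm_sum_le _ _)).trans ?_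
  push_cast
  refine Finset.sum_le_sum fun i hi => ?_
  have : ‖c i * x i * y i‖₊ ≤ ‖x i‖₊ * ‖y i‖₊ :=
    calc ‖c i * x i * y i‖₊ ≤ ‖c i‖₊ * ‖x i‖₊ * ‖y i‖₊ :=
          (nnnorm_mul_le _ _).trans (mul_le_mul_left (nnnorm_mul_le _ _) _)
      _ ≤ 1 * ‖x i‖₊ * ‖y i‖₊ := by gcongr; exact hc i hi
      _ = ‖x i‖₊ * ‖y i‖₊ := by rw [one_mul]
  exact_mod_cast this

namespace DyadicI

lemma len_pos (I : DyadicI) : 0 < I.len := zpow_pos two_pos _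

lemma left_mem_set (I : DyadicI) : I.a ∈ I.set := ⟨le_rfl, lt_add_of_pos_right _ I.len_pos⟩

lemma measurableSet_set (I : DyadicI) : MeasurableSet I.set := measurableSet_Ico

lemma volume_set (I : DyadicI) : volume I.set = ENNReal.ofReal I.len := by
  rw [DyadicI.set, Real.volume_Ico, add_sub_cancel_left]

lemma volume_set_pos (I : DyadicI) : 0 < volume I.set := by
  simp [volume_set, I.len_pos]

lemma volume_set_ne_top (I : DyadicI) : volume I.set ≠ ∞ := by
  simp [volume_set]

lemma setLIntegral_indicator_div_len (I : DyadicI) (s : Set ℝ) :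
    ∫⁻ x in s, I.set.indicator (fun _ => 1) x / ENNReal.ofReal I.len =
      volume (I.set ∩ s) / volume I.set := by
  simp_rw [div_eq_mul_inv]
  rw [lintegral_mul_const _ (by fun_prop (disch := exact I.measurableSet_set)),
    lintegral_indicator_const I.measurableSet_set, one_mul,
    Measure.restrict_apply I.measurableSet_set, I.volume_set]

lemma mem_set_iff {I : DyadicI} {x : ℝ} : x ∈ I.set ↔ ⌊x / I.len⌋ = I.m := by
  rw [Int.floor_eq_iff, le_div_iff₀ I.len_pos, div_lt_iff₀ I.len_pos, DyadicI.set, Set.mem_Ico,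
    DyadicI.a, ← DyadicI.len, add_mul, one_mul]

lemma set_subset_of_k_le {I J : DyadicI} (hk : I.k ≤ J.k) {x : ℝ} (hxI : x ∈ I.set)
    (hxJ : x ∈ J.set) : I.set ⊆ J.set := by
  obtain ⟨d, hd⟩ := Int.eq_ofNat_of_zero_le (sub_nonneg.2 hk)
  have hlen : J.len = I.len * (2 ^ d : ℕ) := by
    rw [DyadicI.len, DyadicI.len, Nat.cast_pow, Nat.cast_ofNat, ← zpow_natCast,
      ← zpow_add₀ two_ne_zero, ← hd, add_sub_cancel]
  have hfloor : ∀ y : ℝ, ⌊y / J.len⌋ = ⌊y / I.len⌋ / (2 ^ d : ℕ) := by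
    intro y
    rw [← Int.floor_div_natCast, hlen, div_div]
  intro y hy
  rw [mem_set_iff] at hxI hxJ hy ⊢
  rw [hfloor] at hxJ ⊢
  rw [hy, ← hxI, hxJ]

lemma set_subset_or_subset {I J : DyadicI} {x : ℝ} (hxI : x ∈ I.set) (hxJ : x ∈ J.set) :
    I.set ⊆ J.set ∨ J.set ⊆ I.set :=
  (le_total I.k J.k).imp (set_subset_of_k_le · hxI hxJ) (set_subset_of_k_le · hxJ hxI)

lemma set_injective : Function.Injective DyadicI.set := by
  rintro ⟨k, m⟩ ⟨k', m'⟩ h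
  obtain ⟨ha, hb⟩ := (Set.Ico_eq_Ico_iff (Or.inl (lt_add_of_pos_right _ (len_pos _)))).1 h
  simp only [DyadicI.a, DyadicI.len] at ha hb
  have hk : k = k' := zpow_right_injective₀ (two_pos : (0 : ℝ) < 2) (by norm_num)
    (show (2 : ℝ) ^ k = 2 ^ k' by linarith)
  subst hk
  have hm : (m : ℝ) = m' := mul_right_cancel₀ (zpow_pos two_pos k).ne' ha
  rw [Int.cast_inj.1 hm]

end DyadicI

lemma volume_biUnion_set_pos {𝒢 : Finset DyadicI} (h : 𝒢.Nonempty) :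
    0 < volume (⋃ I ∈ 𝒢, I.set) :=
  let ⟨I, hI⟩ := h
  I.volume_set_pos.trans_le (measure_mono (Set.subset_biUnion_of_mem hI))

lemma volume_biUnion_set_ne_top (𝒢 : Finset DyadicI) : volume (⋃ I ∈ 𝒢, I.set) ≠ ∞ :=
  ne_top_of_le_ne_top (ENNReal.sum_ne_top.2 fun I _ => I.volume_set_ne_top)
    (measure_biUnion_finset_le 𝒢 _)

def maxIntervals (𝒢 : Finset DyadicI) : Finset DyadicI :=
  𝒢.filter (fun M => ∀ J ∈ 𝒢, M.set ⊆ J.set → J.set ⊆ M.set)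

namespace maxIntervals

variable {𝒢 : Finset DyadicI} {M : DyadicI}

lemma subset (𝒢 : Finset DyadicI) : maxIntervals 𝒢 ⊆ 𝒢 := Finset.filter_subset _ _

lemma exists_superset {I : DyadicI} (hI : I ∈ 𝒢) : ∃ M ∈ maxIntervals 𝒢, I.set ⊆ M.set := by
  obtain ⟨M, hM, hmax⟩ := (𝒢.filter (fun J => I.set ⊆ J.set)).exists_max_image DyadicI.k
    ⟨I, Finset.mem_filter.2 ⟨hI, subset_rfl⟩⟩
  rw [Finset.mem_filter] at hM
  refine ⟨M, Finset.mem_filter.2 ⟨hM.1, fun J hJ hMJ => ?_⟩, hM.2⟩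
  exact DyadicI.set_subset_of_k_le (hmax J (Finset.mem_filter.2 ⟨hJ, hM.2.trans hMJ⟩))
    (hMJ M.left_mem_set) M.left_mem_set

lemma set_subset_of_mem {I : DyadicI} (hM : M ∈ maxIntervals 𝒢) (hI : I ∈ 𝒢) {x : ℝ}
    (hxI : x ∈ I.set) (hxM : x ∈ M.set) : I.set ⊆ M.set :=
  (DyadicI.set_subset_or_subset hxI hxM).elim id ((Finset.mem_filter.1 hM).2 I hI)

lemma pairwiseDisjoint_set (𝒢 : Finset DyadicI) :
    (maxIntervals 𝒢 : Set DyadicI).PairwiseDisjoint DyadicI.set := by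
  intro M hM M' hM' hne
  rw [Function.onFun, Set.disjoint_left]
  intro x hx hx'
  exact hne (DyadicI.set_injective ((set_subset_of_mem hM' (subset 𝒢 hM) hx hx').antisymm
    (set_subset_of_mem hM (subset 𝒢 hM') hx' hx)))

lemma biUnion_set (𝒢 : Finset DyadicI) :
    ⋃ M ∈ maxIntervals 𝒢, M.set = ⋃ I ∈ 𝒢, I.set := by
  refine (Set.biUnion_subset_biUnion_left (subset 𝒢)).antisymm (Set.iUnion₂_subset fun I hI => ?_)
  obtain ⟨M, hM, hIM⟩ := exists_superset hI
  exact hIM.trans (Set.subset_biUnion_of_mem (u := DyadicI.set) hM)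

lemma volume_biUnion (𝒢 : Finset DyadicI) :
    volume (⋃ I ∈ 𝒢, I.set) = ∑ M ∈ maxIntervals 𝒢, volume M.set := by
  rw [← biUnion_set, measure_biUnion_finset (pairwiseDisjoint_set 𝒢)
    (fun M _ => M.measurableSet_set)]

end maxIntervals

lemma volume_biUnion_le_two_mul {𝒢 : Finset DyadicI} {Ω : Set ℝ} (hΩ : MeasurableSet Ω)
    (h : ∀ I ∈ 𝒢, volume I.set ≤ 2 * volume (I.set ∩ Ω)) :
    volume (⋃ I ∈ 𝒢, I.set) ≤ 2 * volume Ω := by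
  calc volume (⋃ I ∈ 𝒢, I.set) = ∑ M ∈ maxIntervals 𝒢, volume M.set :=
        maxIntervals.volume_biUnion 𝒢
    _ ≤ ∑ M ∈ maxIntervals 𝒢, 2 * volume (M.set ∩ Ω) :=
        Finset.sum_le_sum fun M hM => h M (maxIntervals.subset 𝒢 hM)
    _ = 2 * volume (⋃ M ∈ maxIntervals 𝒢, M.set ∩ Ω) := by
        rw [← Finset.mul_sum, measure_biUnion_finset
          (fun M hM M' hM' hne => (maxIntervals.pairwiseDisjoint_set 𝒢 hM hM' hne).mono
            Set.inter_subset_left Set.inter_subset_left)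
          (fun M _ => M.measurableSet_set.inter hΩ)]
    _ ≤ 2 * volume Ω := by
        gcongr
        exact Set.iUnion₂_subset fun M _ => Set.inter_subset_right

section SquareFunction

variable (a : DyadicI → (ℝ → ℝ) → ℂ) (f : ℝ → ℝ)

lemma sqFun_mono {𝒥 𝒦 : Finset DyadicI} (h : 𝒥 ⊆ 𝒦) : sqFun a 𝒥 f ≤ sqFun a 𝒦 f :=
  fun _ => ENNReal.rpow_le_rpow (Finset.sum_le_sum_of_subset h) (by norm_num)

lemma measurable_sqFun (𝒥 : Finset DyadicI) : Measurable (sqFun a 𝒥 f) := by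
  unfold sqFun
  fun_prop (disch := exact DyadicI.measurableSet_set _)

lemma exists_mem_of_sqFun_ne_zero {𝒥 : Finset DyadicI} {x : ℝ} (h : sqFun a 𝒥 f x ≠ 0) :
    ∃ I ∈ 𝒥, x ∈ I.set := by
  by_contra! hx
  refine h ?_
  rw [sqFun, Finset.sum_eq_zero fun I hI => by simp [hx I hI]]
  simp

lemma sqFun_eq_of_mem_maxIntervals {𝒢 : Finset DyadicI} {M : DyadicI}
    (hM : M ∈ maxIntervals 𝒢) {x : ℝ} (hx : x ∈ M.set) :
    sqFun a 𝒢 f x = sqFun a (𝒢.filter (fun I => I.set ⊆ M.set)) f x := by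
  unfold sqFun
  rw [Finset.sum_filter_of_ne]
  intro I hI hne
  have hxI : x ∈ I.set := by
    by_contra hxI
    simp [hxI] at hne
  exact maxIntervals.set_subset_of_mem hM hI hxI hx

lemma setOf_lt_sqFun_subset (𝒢 : Finset DyadicI) (α : ℝ≥0∞) :
    {x | α < sqFun a 𝒢 f x} ⊆
      ⋃ M ∈ maxIntervals 𝒢, {x | α < sqFun a (𝒢.filter (fun I => I.set ⊆ M.set)) f x} := by
  intro x hx
  obtain ⟨I, hI, hxI⟩ := exists_mem_of_sqFun_ne_zero a f (zero_le.trans_lt hx).ne'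
  obtain ⟨M, hM, hIM⟩ := maxIntervals.exists_superset hI
  refine Set.mem_biUnion hM (show α < _ from ?_)
  rwa [← sqFun_eq_of_mem_maxIntervals a f hM (hIM hxI)]

lemma volume_setOf_lt_sqFun_le {p : ℝ} (hp : 0 < p) {𝒢 : Finset DyadicI} {A : ℝ≥0∞}
    (hA : ∀ M ∈ maxIntervals 𝒢, wkNorm p (sqFun a (𝒢.filter (fun I => I.set ⊆ M.set)) f) ≤
      A * volume M.set ^ (1 / p)) :
    8 * volume {x | 8 ^ (1 / p) * A < sqFun a 𝒢 f x} ≤ volume (⋃ I ∈ 𝒢, I.set) := by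
  calc 8 * volume {x | 8 ^ (1 / p) * A < sqFun a 𝒢 f x}
      ≤ 8 * ∑ M ∈ maxIntervals 𝒢, volume M.set / 8 := by
        gcongr
        refine (measure_mono (setOf_lt_sqFun_subset a f 𝒢 _)).trans
          ((measure_biUnion_finset_le _ _).trans (Finset.sum_le_sum fun M hM => ?_))
        exact volume_lt_le_div_of_wkNorm_le hp (by norm_num) (by norm_num) (hA M hM)
    _ = volume (⋃ I ∈ 𝒢, I.set) := by
        rw [maxIntervals.volume_biUnion, Finset.mul_sum]
        exact Finset.sum_congr rfl fun M _ => ENNReal.mul_div_cancel (by norm_num) (by norm_num)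

lemma sum_mul_indicator_div_le_sqFun_mul_sqFun (g : ℝ → ℝ) (𝒢 : Finset DyadicI) (x : ℝ) :
    ∑ I ∈ 𝒢, ‖a I f‖₊ * ‖a I g‖₊ * (I.set.indicator (fun _ => 1) x / ENNReal.ofReal I.len) ≤
      sqFun a 𝒢 f x * sqFun a 𝒢 g x := by
  simpa only [sqFun, mul_div_assoc] using ENNReal.sum_mul_mul_le_sqrt_mul_sqrt 𝒢 _ _
    (fun I => I.set.indicator (fun _ => 1) x / ENNReal.ofReal I.len)

end SquareFunction

lemma sum_mul_le_of_sqFun_le (a : DyadicI → (ℝ → ℝ) → ℂ) (f g : ℝ → ℝ) {𝒢 : Finset DyadicI}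
    {Ω : Set ℝ} (hgood : ∀ I ∈ 𝒢, volume I.set ≤ 2 * volume (I.set \ Ω))
    {α β : ℝ≥0∞} (hf : ∀ x ∉ Ω, sqFun a 𝒢 f x ≤ α) (hg : ∀ x ∉ Ω, sqFun a 𝒢 g x ≤ β) :
    ∑ I ∈ 𝒢, (‖a I f‖₊ : ℝ≥0∞) * ‖a I g‖₊ ≤ 2 * (α * β) * volume (⋃ I ∈ 𝒢, I.set) := by
  set U := ⋃ I ∈ 𝒢, I.set
  have hU : MeasurableSet U := Finset.measurableSet_biUnion _ fun I _ => I.measurableSet_set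
  set F : ℝ → ℝ≥0∞ := fun x => ∑ I ∈ 𝒢, ‖a I f‖₊ * ‖a I g‖₊ *
    (I.set.indicator (fun _ => 1) x / ENNReal.ofReal I.len)
  have hF_int : ∫⁻ x in Ωᶜ, F x =
      ∑ I ∈ 𝒢, ‖a I f‖₊ * ‖a I g‖₊ * (volume (I.set \ Ω) / volume I.set) := by
    rw [lintegral_finsetSum _ fun I _ => by fun_prop (disch := exact I.measurableSet_set)]
    refine Finset.sum_congr rfl fun I _ => ?_
    rw [lintegral_const_mul _ (by fun_prop (disch := exact I.measurableSet_set)),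
      I.setLIntegral_indicator_div_len]
    rfl
  have hF_le : ∀ x ∈ Ωᶜ, F x ≤ U.indicator (fun _ => α * β) x := by
    intro x hx
    by_cases hxU : x ∈ U
    · rw [Set.indicator_of_mem hxU]
      exact (sum_mul_indicator_div_le_sqFun_mul_sqFun a f g 𝒢 x).trans
        (mul_le_mul' (hf x hx) (hg x hx))
    · simp only [U, Set.mem_iUnion, not_exists] at hxU
      refine le_of_eq_of_le (Finset.sum_eq_zero fun I hI => ?_) zero_le
      simp [Set.indicator_of_notMem (hxU I hI)]
  calc ∑ I ∈ 𝒢, (‖a I f‖₊ : ℝ≥0∞) * ‖a I g‖₊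
      ≤ ∑ I ∈ 𝒢, 2 * (‖a I f‖₊ * ‖a I g‖₊ * (volume (I.set \ Ω) / volume I.set)) := by
        refine Finset.sum_le_sum fun I hI => ?_
        rw [mul_left_comm, ← mul_div_assoc]
        refine le_mul_of_one_le_right zero_le ?_
        rw [ENNReal.le_div_iff_mul_le (Or.inl I.volume_set_pos.ne') (Or.inl I.volume_set_ne_top),
          one_mul]
        exact hgood I hI
    _ = 2 * ∫⁻ x in Ωᶜ, F x := by rw [hF_int, Finset.mul_sum]
    _ ≤ 2 * ∫⁻ x in Ωᶜ, U.indicator (fun _ => α * β) x := by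
        gcongr 2 * ?_
        exact setLIntegral_mono (measurable_const.indicator hU) hF_le
    _ ≤ 2 * ∫⁻ x, U.indicator (fun _ => α * β) x := by
        gcongr
        exact Measure.restrict_le_self
    _ = 2 * (α * β) * volume U := by
        rw [lintegral_indicator_const hU, mul_assoc 2]

lemma sum_filter_mul_le_of_sqFun_le (a : DyadicI → (ℝ → ℝ) → ℂ) (f g : ℝ → ℝ)
    {𝒢 : Finset DyadicI} {Ω : Set ℝ} (hΩ : MeasurableSet Ω) {α β : ℝ≥0∞}
    (hf : ∀ x ∉ Ω, sqFun a 𝒢 f x ≤ α) (hg : ∀ x ∉ Ω, sqFun a 𝒢 g x ≤ β) :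
    ∑ I ∈ 𝒢.filter (fun I => ¬ volume I.set ≤ 2 * volume (I.set ∩ Ω)),
        (‖a I f‖₊ : ℝ≥0∞) * ‖a I g‖₊ ≤ 2 * (α * β) * volume (⋃ I ∈ 𝒢, I.set) := by
  refine (sum_mul_le_of_sqFun_le a f g
    (fun I hI => measure_le_two_mul_diff hΩ I.volume_set_ne_top
      (not_le.1 (Finset.mem_filter.1 hI).2).le)
    (fun x hx => (sqFun_mono a f (Finset.filter_subset _ 𝒢) x).trans (hf x hx))
    (fun x hx => (sqFun_mono a g (Finset.filter_subset _ 𝒢) x).trans (hg x hx))).trans ?_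
  gcongr
  exact Set.iUnion_subset_iUnion_const fun hI => (Finset.mem_filter.1 hI).1

lemma wkNorm_sqFun_filter_le_of_subset (a : DyadicI → (ℝ → ℝ) → ℂ) (f : ℝ → ℝ) {p : ℝ}
    (hp : 0 ≤ p) {ℱ 𝒢 : Finset DyadicI} {A : ℝ≥0∞}
    (hA : ∀ M ∈ ℱ, wkNorm p (sqFun a (ℱ.filter (fun I => I.set ⊆ M.set)) f) ≤
      A * volume M.set ^ (1 / p))
    (h𝒢 : 𝒢 ⊆ ℱ) {M : DyadicI} (hM : M ∈ ℱ) :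
    wkNorm p (sqFun a (𝒢.filter (fun I => I.set ⊆ M.set)) f) ≤ A * volume M.set ^ (1 / p) :=
  (wkNorm_mono hp (sqFun_mono a f (Finset.filter_subset_filter _ h𝒢))).trans (hA M hM)

lemma four_mul_volume_exceptional_le (a : DyadicI → (ℝ → ℝ) → ℂ) (f g : ℝ → ℝ) {p q : ℝ}
    (hp : 0 < p) (hq : 0 < q) {𝒢 : Finset DyadicI} {A B : ℝ≥0∞}
    (hA : ∀ M ∈ maxIntervals 𝒢, wkNorm p (sqFun a (𝒢.filter (fun I => I.set ⊆ M.set)) f) ≤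
      A * volume M.set ^ (1 / p))
    (hB : ∀ M ∈ maxIntervals 𝒢, wkNorm q (sqFun a (𝒢.filter (fun I => I.set ⊆ M.set)) g) ≤
      B * volume M.set ^ (1 / q)) :
    4 * volume ({x | 8 ^ (1 / p) * A < sqFun a 𝒢 f x} ∪ {x | 8 ^ (1 / q) * B < sqFun a 𝒢 g x}) ≤
      volume (⋃ I ∈ 𝒢, I.set) := by
  have hf := volume_setOf_lt_sqFun_le a f hp hA
  have hg := volume_setOf_lt_sqFun_le a g hq hB
  rw [← ENNReal.mul_le_mul_iff_right two_ne_zero ofNat_ne_top, ← mul_assoc]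
  calc (2 * 4 : ℝ≥0∞) * volume ({x | 8 ^ (1 / p) * A < sqFun a 𝒢 f x} ∪
        {x | 8 ^ (1 / q) * B < sqFun a 𝒢 g x})
      ≤ 8 * (volume {x | 8 ^ (1 / p) * A < sqFun a 𝒢 f x} +
          volume {x | 8 ^ (1 / q) * B < sqFun a 𝒢 g x}) := by
        gcongr
        exacts [by norm_num, measure_union_le _ _]
    _ ≤ 2 * volume (⋃ I ∈ 𝒢, I.set) := by rw [mul_add, two_mul]; gcongr

theorem sum_mul_le_volume_biUnion (a : DyadicI → (ℝ → ℝ) → ℂ) (f g : ℝ → ℝ) {p q : ℝ}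
    (hp : 0 < p) (hq : 0 < q) {ℱ : Finset DyadicI} {A B : ℝ≥0∞}
    (hA : ∀ M ∈ ℱ, wkNorm p (sqFun a (ℱ.filter (fun I => I.set ⊆ M.set)) f) ≤
      A * volume M.set ^ (1 / p))
    (hB : ∀ M ∈ ℱ, wkNorm q (sqFun a (ℱ.filter (fun I => I.set ⊆ M.set)) g) ≤
      B * volume M.set ^ (1 / q))
    {𝒢 : Finset DyadicI} (h𝒢 : 𝒢 ⊆ ℱ) :
    ∑ I ∈ 𝒢, (‖a I f‖₊ : ℝ≥0∞) * ‖a I g‖₊ ≤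
      4 * 8 ^ (1 / p) * 8 ^ (1 / q) * A * B * volume (⋃ I ∈ 𝒢, I.set) := by
  induction 𝒢 using Finset.strongInduction with | H 𝒢 ih => ?_
  rcases 𝒢.eq_empty_or_nonempty with rfl | h𝒢ne
  · simp
  set U := ⋃ I ∈ 𝒢, I.set
  set Ω := {x | 8 ^ (1 / p) * A < sqFun a 𝒢 f x} ∪ {x | 8 ^ (1 / q) * B < sqFun a 𝒢 g x}
  have hΩ : MeasurableSet Ω :=
    (measurableSet_lt measurable_const (measurable_sqFun a f 𝒢)).union
      (measurableSet_lt measurable_const (measurable_sqFun a g 𝒢))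
  have hΩU : 4 * volume Ω ≤ volume U := four_mul_volume_exceptional_le a f g hp hq
    (fun M hM => wkNorm_sqFun_filter_le_of_subset a f hp.le hA h𝒢 (h𝒢 (maxIntervals.subset 𝒢 hM)))
    (fun M hM => wkNorm_sqFun_filter_le_of_subset a g hq.le hB h𝒢 (h𝒢 (maxIntervals.subset 𝒢 hM)))
  set bad := 𝒢.filter (fun I => volume I.set ≤ 2 * volume (I.set ∩ Ω))
  have hbad : volume (⋃ I ∈ bad, I.set) ≤ 2 * volume Ω :=
    volume_biUnion_le_two_mul hΩ fun I hI => (Finset.mem_filter.1 hI).2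
  have hbad_ssub : bad ⊂ 𝒢 := by
    refine (Finset.filter_subset _ _).ssubset_of_ne fun hbad_eq => ?_
    rw [show bad = 𝒢 from hbad_eq] at hbad
    refine (volume_biUnion_set_pos h𝒢ne).ne' (ENNReal.eq_zero_of_two_mul_le
      (volume_biUnion_set_ne_top 𝒢) ?_)
    calc 2 * volume U ≤ 2 * (2 * volume Ω) := by gcongr
      _ = 4 * volume Ω := by ring
      _ ≤ volume U := hΩU
  have hgood := sum_filter_mul_le_of_sqFun_le a f g hΩ (α := 8 ^ (1 / p) * A)
    (β := 8 ^ (1 / q) * B) (fun x hx => not_lt.1 fun h => hx (Or.inl h))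
    (fun x hx => not_lt.1 fun h => hx (Or.inr h))
  rw [← Finset.sum_filter_add_sum_filter_not 𝒢 (fun I => volume I.set ≤ 2 * volume (I.set ∩ Ω))]
  calc _ ≤ 4 * 8 ^ (1 / p) * 8 ^ (1 / q) * A * B * (2 * volume Ω) +
        2 * (8 ^ (1 / p) * A * (8 ^ (1 / q) * B)) * volume U := by
        exact add_le_add ((ih bad hbad_ssub (hbad_ssub.subset.trans h𝒢)).trans (by gcongr)) hgood
    _ = 2 * 8 ^ (1 / p) * 8 ^ (1 / q) * A * B * (4 * volume Ω) +
        2 * 8 ^ (1 / p) * 8 ^ (1 / q) * A * B * volume U := by ring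
    _ ≤ 2 * 8 ^ (1 / p) * 8 ^ (1 / q) * A * B * volume U +
        2 * 8 ^ (1 / p) * 8 ^ (1 / q) * A * B * volume U := by gcongr
    _ = 4 * 8 ^ (1 / p) * 8 ^ (1 / q) * A * B * volume U := by ring

/-- Localization of the bilinear form via weak-`L^p` norms of localized square functions. -/
theorem localized_estimate_square_functions (p q : ℝ) (hp : 0 < p) (hq : 0 < q) :
    ∃ C : ℝ≥0∞, C ≠ ∞ ∧
      ∀ (a : DyadicI → (ℝ → ℝ) → ℂ), IsLinearCoeff a →
      ∀ (ℐ : Finset DyadicI) (c : DyadicI → ℂ), (∀ I, ‖c I‖ ≤ 1) →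
      ∀ (f g : ℝ → ℝ), MemLp f 2 (volume : Measure ℝ) → MemLp g 2 volume →
      ∀ I₀ : DyadicI,
        (‖∑ I ∈ ℐ.filter (fun I => I.set ⊆ I₀.set), c I * a I f * a I g‖₊ : ℝ≥0∞) ≤
          C * (⨆ I' ∈ ℐ.filter (fun I => I.set ⊆ I₀.set),
                (ENNReal.ofReal I'.len) ^ (-(1/p)) *
                  wkNorm p (sqFun a ((ℐ.filter (fun I => I.set ⊆ I₀.set)).filter
                    (fun I => I.set ⊆ I'.set)) f)) *
            (⨆ I' ∈ ℐ.filter (fun I => I.set ⊆ I₀.set),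
                (ENNReal.ofReal I'.len) ^ (-(1/q)) *
                  wkNorm q (sqFun a ((ℐ.filter (fun I => I.set ⊆ I₀.set)).filter
                    (fun I => I.set ⊆ I'.set)) g)) *
            ENNReal.ofReal I₀.len := by
  refine ⟨4 * 8 ^ (1 / p) * 8 ^ (1 / q), by finiteness, ?_⟩
  intro a _ ℐ c hc f g _ _ I₀
  set ℱ := ℐ.filter (fun I => I.set ⊆ I₀.set)
  have hscale : ∀ (r : ℝ) (h : ℝ → ℝ) (M : DyadicI) (hM : M ∈ ℱ),
      wkNorm r (sqFun a (ℱ.filter (fun I => I.set ⊆ M.set)) h) ≤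
        (⨆ I' ∈ ℱ, ENNReal.ofReal I'.len ^ (-(1 / r)) *
          wkNorm r (sqFun a (ℱ.filter (fun I => I.set ⊆ I'.set)) h)) * volume M.set ^ (1 / r) :=
    fun r h M hM => by
      rw [M.volume_set]
      exact ENNReal.le_mul_rpow_of_rpow_neg_mul_le (by simp [M.len_pos]) ENNReal.ofReal_ne_top
        (le_iSup₂ (f := fun I' (_ : I' ∈ ℱ) => ENNReal.ofReal I'.len ^ (-(1 / r)) *
          wkNorm r (sqFun a (ℱ.filter (fun I => I.set ⊆ I'.set)) h)) M hM)
  calc _ ≤ ∑ I ∈ ℱ, (‖a I f‖₊ : ℝ≥0∞) * ‖a I g‖₊ := nnnorm_sum_mul_mul_le ℱ (fun I _ => hc I) _ _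
    _ ≤ _ := sum_mul_le_volume_biUnion a f g hp hq (hscale p f) (hscale q g) subset_rfl
    _ ≤ _ := by
      rw [← I₀.volume_set]
      gcongr
      exact Set.iUnion₂_subset fun I hI => (Finset.mem_filter.1 hI).2
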